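/- arXiv:1606.01793 — 2 statements merged into one kernel-verified Lean document; each statement's English description precedes it below -/
import Mathlib

section
/- For a vector x ∈ ℝⁿ with nonincreasing nonnegative entries x₁ ≥ x₂ ≥ … ≥ xₙ ≥ 0 and 1 ≤ r ≤ n, the dual of the 'top-r ℓ²' norm evaluates as: (‖x‖_{ℓ²,r})^D = sqrt( Σ_{i=1}^{r-s-1} xᵢ² + (Σ_{i=r-s}^{n} xᵢ)²/(s+1) ), where s is the smallest integer in {0,…,r−1} such that x_{r−s−1} > (Σ_{i=r−s}^{n} xᵢ)/(s+1) (with x₀ := +∞). -/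
/-!
With `m = r - s - 1` and `c = (x_{m+1} + ⋯ + x_n) / (s + 1)`, the optimal dual vector is the
pooled profile `F = (x₁, …, x_m, c, …, c)`; the defining properties of `s` say exactly that
`x_{m+1} ≤ c ≤ x_m`, so `F` is nonincreasing, and `⟨x, F⟩ = ‖F‖²_{ℓ²,r}`, so `F / ‖F‖_{ℓ²,r}`
attains `‖F‖_{ℓ²,r}`. Conversely, by the rearrangement inequality it suffices to pair `x` with a
nonincreasing nonnegative `b`; water-filling moves the mass of `x` beyond index `r` onto the
slots `m < i ≤ r` and gives `⟨x, b⟩ ≤ ∑_{i ≤ r} F_i b_i`, and Cauchy–Schwarz bounds this by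
`‖F‖_{ℓ²,r} ‖b‖_{ℓ²,r}`.
-/

open BigOperators Finset

/-- The absolute values of the entries of `x ∈ ℝⁿ`, sorted in nonincreasing order,
0-indexed: `svVec x 0 = |x|_[1] ≥ svVec x 1 = |x|_[2] ≥ …`. -/
noncomputable def svVec {n : ℕ} (x : Fin n → ℝ) (i : ℕ) : ℝ :=
  (((List.ofFn fun j : Fin n => |x j|).mergeSort (fun a b => decide (a ≥ b))).getD i 0)

/-- The `top-r ℓ²` norm: the ℓ² norm of the `r` largest-magnitude entries. -/
noncomputable def topEll2 {n : ℕ} (r : ℕ) (x : Fin n → ℝ) : ℝ :=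
  Real.sqrt (∑ i ∈ Finset.range r, svVec x i ^ 2)

/-- Euclidean (ℓ²) norm on `ℝⁿ`. -/
noncomputable def euclN {n : ℕ} (x : Fin n → ℝ) : ℝ := Real.sqrt (∑ i, x i ^ 2)

/-- ℓ¹ norm on `ℝⁿ`. -/
noncomputable def l1N {n : ℕ} (x : Fin n → ℝ) : ℝ := ∑ i, |x i|

/-- Number of nonzero entries of `x`. -/
noncomputable def suppCard {n : ℕ} (x : Fin n → ℝ) : ℕ :=
  (Finset.univ.filter fun i => x i ≠ 0).card

/-- The `k`-support norm: infimum of `Σ_g ‖v_g‖₂` over all finite decompositions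
`x = Σ_g v_g` where each `v_g` has at most `k` nonzero entries. -/
noncomputable def ksup {n : ℕ} (k : ℕ) (x : Fin n → ℝ) : ℝ :=
  sInf {c : ℝ | ∃ (N : ℕ) (v : Fin N → (Fin n → ℝ)),
    (∀ g, suppCard (v g) ≤ k) ∧ (∑ g, v g) = x ∧ c = ∑ g, euclN (v g)}

/-- Dual norm on `ℝⁿ` with respect to the standard inner product. -/
noncomputable def dualVec {n : ℕ} (ν : (Fin n → ℝ) → ℝ) (x : Fin n → ℝ) : ℝ :=
  sSup {c : ℝ | ∃ y, ν y ≤ 1 ∧ c = ∑ i, x i * y i}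

noncomputable def svList {n : ℕ} (y : Fin n → ℝ) : List ℝ :=
  (List.ofFn fun j : Fin n => |y j|).mergeSort (fun a b => decide (a ≥ b))

section SortedAbs

variable {n : ℕ} (y : Fin n → ℝ)

lemma svVec_eq_getD (i : ℕ) : svVec y i = (svList y).getD i 0 := rfl

lemma length_svList : (svList y).length = n := by
  simp [svList]

lemma pairwise_svList : (svList y).Pairwise (· ≥ ·) := by
  refine (List.pairwise_mergeSort (le := fun a b : ℝ => decide (a ≥ b)) ?_ ?_ _).imp ?_
  · simp only [decide_eq_true_eq]
    exact fun a b c hab hbc => hbc.trans hab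
  · simpa using fun a b => le_total b a
  · simp

lemma svList_eq_ofFn {g : Fin n → ℝ} (hg : Antitone g)
    (hperm : (List.ofFn g).Perm (List.ofFn fun j => |y j|)) : svList y = List.ofFn g :=
  List.Perm.eq_of_pairwise' (pairwise_svList y) (List.pairwise_ofFn.2 fun _ _ hij => hg hij.le)
    ((List.mergeSort_perm _ _).trans hperm.symm)

lemma svVec_of_ge {i : ℕ} (hi : n ≤ i) : svVec y i = 0 := by
  rw [svVec_eq_getD]
  exact List.getD_eq_default _ _ (by rwa [length_svList])

lemma exists_perm_svVec_eq :
    ∃ σ : Equiv.Perm (Fin n),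
      Antitone (fun i => |y (σ i)|) ∧ ∀ i : Fin n, svVec y i = |y (σ i)| := by
  set h : Fin n → ℝ := fun j => |y j|
  set σ := Fin.revPerm.trans (Tuple.sort h)
  have hσ : Antitone (h ∘ σ) := fun i j hij =>
    Tuple.monotone_sort h (Fin.rev_le_rev.2 hij)
  refine ⟨σ, hσ, fun i => ?_⟩
  rw [svVec_eq_getD, svList_eq_ofFn y hσ (Equiv.Perm.ofFn_comp_perm σ h),
    List.getD_eq_getElem _ _ (by simp), List.getElem_ofFn]
  rfl

lemma svVec_nonneg (i : ℕ) : 0 ≤ svVec y i := by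
  obtain ⟨σ, -, hσ⟩ := exists_perm_svVec_eq y
  rcases lt_or_ge i n with hi | hi
  · simpa only [hσ ⟨i, hi⟩] using abs_nonneg (y (σ ⟨i, hi⟩))
  · rw [svVec_of_ge y hi]

lemma svVec_antitone : Antitone (svVec y) := by
  obtain ⟨σ, hanti, hσ⟩ := exists_perm_svVec_eq y
  intro i j hij
  rcases lt_or_ge j n with hj | hj
  · simpa only [← hσ] using hanti (show (⟨i, by omega⟩ : Fin n) ≤ ⟨j, hj⟩ from hij)
  · rw [svVec_of_ge y hj]
    exact svVec_nonneg y i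

lemma svVec_of_antitone (hy : Antitone y) (hy0 : ∀ i, 0 ≤ y i) (i : Fin n) :
    svVec y i = y i := by
  have habs : (fun j => |y j|) = y := funext fun j => abs_of_nonneg (hy0 j)
  rw [svVec_eq_getD, svList_eq_ofFn y hy (by rw [habs]),
    List.getD_eq_getElem _ _ (by simp), List.getElem_ofFn]

lemma sum_mul_le_sum_mul_svVec {a : Fin n → ℝ} (ha : Antitone a) (ha0 : ∀ i, 0 ≤ a i) :
    ∑ i, a i * y i ≤ ∑ i, a i * svVec y i := by
  obtain ⟨σ, -, hσ⟩ := exists_perm_svVec_eq y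
  have hmono : Monovary a (fun i : Fin n => svVec y i) :=
    ha.monovary fun i j hij => svVec_antitone y hij
  calc ∑ i, a i * y i ≤ ∑ i, a i * |y i| :=
        sum_le_sum fun i _ => mul_le_mul_of_nonneg_left (le_abs_self _) (ha0 i)
    _ = ∑ i, a i • svVec y (σ⁻¹ i) := by simp [hσ]
    _ ≤ ∑ i, a i * svVec y i := hmono.sum_smul_comp_perm_le_sum_smul

end SortedAbs

/-- Water-filling: the tail mass `∑_{[r, n)} a i`, which only meets values `b i ≤ β`, is absorbed
by the slack `c - a i ≥ 0` on `[m, r)`, where `b i ≥ β`. -/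
lemma sum_Ico_mul_le_of_pivot {a b : ℕ → ℝ} {m r n : ℕ} {c β : ℝ} (hmr : m ≤ r) (hrn : r ≤ n)
    (hac : ∀ i ∈ Ico m r, a i ≤ c) (ha0 : ∀ i ∈ Ico r n, 0 ≤ a i)
    (hβb : ∀ i ∈ Ico m r, β ≤ b i) (hbβ : ∀ i ∈ Ico r n, b i ≤ β)
    (hsum : ∑ i ∈ Ico m n, a i = ∑ _i ∈ Ico m r, c) :
    ∑ i ∈ Ico m n, a i * b i ≤ c * ∑ i ∈ Ico m r, b i := by
  have hsplit (f : ℕ → ℝ) : ∑ i ∈ Ico m n, f i = ∑ i ∈ Ico m r, f i + ∑ i ∈ Ico r n, f i :=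
    (sum_Ico_consecutive f hmr hrn).symm
  have hrest : ∑ i ∈ Ico r n, a i = ∑ i ∈ Ico m r, (c - a i) := by
    rw [sum_sub_distrib]
    linarith [hsplit a]
  calc ∑ i ∈ Ico m n, a i * b i
      ≤ ∑ i ∈ Ico m r, a i * b i + ∑ i ∈ Ico r n, a i * β := by
        rw [hsplit]
        gcongr with i hi
        exacts [ha0 i hi, hbβ i hi]
    _ = ∑ i ∈ Ico m r, a i * b i + ∑ i ∈ Ico m r, (c - a i) * β := by
        rw [← sum_mul, ← sum_mul, hrest]
    _ ≤ ∑ i ∈ Ico m r, a i * b i + ∑ i ∈ Ico m r, (c - a i) * b i := by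
        gcongr with i hi
        exacts [sub_nonneg.2 (hac i hi), hβb i hi]
    _ = c * ∑ i ∈ Ico m r, b i := by
        rw [← sum_add_distrib, mul_sum]
        exact sum_congr rfl fun i _ => by ring

lemma sum_Icc_add_one {M : Type*} [AddCommMonoid M] (f : ℕ → M) (m n : ℕ) :
    ∑ i ∈ Icc (m + 1) n, f i = ∑ i ∈ Ico m n, f (i + 1) := by
  rw [← Ico_add_one_right_eq_Icc, sum_Ico_add']

lemma succ_mul_le_sum_Icc {x : ℕ → ℝ} {k n s : ℕ} (hkn : k ≤ n) (hx0 : ∀ i ∈ Icc k n, 0 ≤ x i)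
    (hprev : 0 < s → x k ≤ (∑ i ∈ Icc (k + 1) n, x i) / s) :
    (s + 1) * x k ≤ ∑ i ∈ Icc k n, x i := by
  rw [← add_sum_Ioc_eq_sum_Icc hkn, ← Icc_add_one_left_eq_Ioc]
  have hrest : s * x k ≤ ∑ i ∈ Icc (k + 1) n, x i := by
    rcases s.eq_zero_or_pos with rfl | hs
    · simpa using sum_nonneg fun i hi => hx0 i (Icc_subset_Icc_left (by omega) hi)
    · rw [← le_div_iff₀' (by positivity)]
      exact hprev hs
  linarith

def poolTail (a : ℕ → ℝ) (m : ℕ) (c : ℝ) (i : ℕ) : ℝ := if i < m then a i else c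

section PoolTail

variable {a : ℕ → ℝ} {m n : ℕ} {c : ℝ}

lemma sum_range_poolTail {k : ℕ} (hmk : m ≤ k) (f : ℕ → ℝ → ℝ) :
    ∑ i ∈ range k, f i (poolTail a m c i) = ∑ i ∈ range m, f i (a i) + ∑ i ∈ Ico m k, f i c := by
  rw [← sum_range_add_sum_Ico _ hmk]
  congr 1 <;> refine sum_congr rfl fun i hi => ?_
  · rw [poolTail, if_pos (mem_range.1 hi)]
  · rw [poolTail, if_neg (mem_Ico.1 hi).1.not_gt]

lemma antitoneOn_poolTail (ha : AntitoneOn a (Set.Iio n)) (hca : ∀ i < m, c ≤ a i) :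
    AntitoneOn (poolTail a m c) (Set.Iio n) := by
  intro i hi j hj hij
  unfold poolTail
  split_ifs
  · exact ha hi hj hij
  · omega
  · exact hca i ‹i < m›
  · exact le_rfl

lemma poolTail_nonneg (ha0 : ∀ i < n, 0 ≤ a i) (hc : 0 ≤ c) : ∀ i < n, 0 ≤ poolTail a m c i := by
  intro i hi
  unfold poolTail
  split_ifs
  exacts [ha0 i hi, hc]

end PoolTail

lemma topEll2_of_antitoneOn {n r : ℕ} {F : ℕ → ℝ} (hrn : r ≤ n)
    (hF : AntitoneOn F (Set.Iio n)) (hF0 : ∀ i < n, 0 ≤ F i) :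
    topEll2 r (fun i : Fin n => F i) = √(∑ i ∈ range r, F i ^ 2) := by
  unfold topEll2
  congr 1
  refine sum_congr rfl fun i hi => ?_
  have hin : i < n := (mem_range.1 hi).trans_le hrn
  rw [svVec_of_antitone _ (fun j k hjk => hF j.isLt k.isLt hjk) (fun j => hF0 j j.isLt) ⟨i, hin⟩]

lemma sum_mul_le_sqrt_mul_topEll2 {n r m : ℕ} {a : ℕ → ℝ} {c : ℝ} (hmr : m ≤ r) (hrn : r ≤ n)
    (ha : AntitoneOn a (Set.Iio n)) (ha0 : ∀ i < n, 0 ≤ a i)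
    (hsum : ∑ i ∈ Ico m n, a i = (r - m : ℕ) * c) (hac : a m ≤ c) (y : Fin n → ℝ) :
    ∑ i : Fin n, a i * y i ≤ √(∑ i ∈ range r, poolTail a m c i ^ 2) * topEll2 r y := by
  set b := svVec y
  have htail : ∑ i ∈ Ico m n, a i * b i ≤ c * ∑ i ∈ Ico m r, b i := by
    refine sum_Ico_mul_le_of_pivot (β := b (r - 1)) hmr hrn (fun i hi => ?_) (fun i hi => ?_)
      (fun i hi => ?_) (fun i hi => ?_) (by rw [sum_const, Nat.card_Ico, nsmul_eq_mul, hsum])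
      <;> rw [mem_Ico] at hi
    · exact (ha (show m < n by omega) (show i < n by omega) hi.1).trans hac
    · exact ha0 i hi.2
    · exact svVec_antitone y (by omega)
    · exact svVec_antitone y (by omega)
  calc ∑ i : Fin n, a i * y i
      ≤ ∑ i : Fin n, a i * b i :=
        sum_mul_le_sum_mul_svVec y (fun i j hij => ha i.isLt j.isLt hij) (fun i => ha0 i i.isLt)
    _ = ∑ i ∈ range m, a i * b i + ∑ i ∈ Ico m n, a i * b i := by
        rw [Fin.sum_univ_eq_sum_range (fun i => a i * b i), sum_range_add_sum_Ico _ (by omega)]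
    _ ≤ ∑ i ∈ range m, a i * b i + c * ∑ i ∈ Ico m r, b i := by gcongr
    _ = ∑ i ∈ range r, poolTail a m c i * b i := by
        rw [sum_range_poolTail hmr (fun i v => v * b i), mul_sum]
    _ ≤ √(∑ i ∈ range r, poolTail a m c i ^ 2) * topEll2 r y :=
        Real.sum_mul_le_sqrt_mul_sqrt _ _ _

theorem dualVec_topEll2_eq_sqrt {n r m : ℕ} {a : ℕ → ℝ} {c : ℝ} (hmr : m < r) (hrn : r ≤ n)
    (ha : AntitoneOn a (Set.Iio n)) (ha0 : ∀ i < n, 0 ≤ a i)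
    (hsum : ∑ i ∈ Ico m n, a i = (r - m : ℕ) * c) (hac : a m ≤ c) (hca : ∀ i < m, c ≤ a i) :
    dualVec (topEll2 r) (fun i : Fin n => a i) =
      √(∑ i ∈ range m, a i ^ 2 + (r - m : ℕ) * c ^ 2) := by
  set F := poolTail a m c with hFdef
  set A := ∑ i ∈ range r, F i ^ 2 with hAdef
  have hA : A = ∑ i ∈ range m, a i ^ 2 + (r - m : ℕ) * c ^ 2 := by
    rw [hAdef, hFdef, sum_range_poolTail hmr.le (fun _ v => v ^ 2), sum_const, Nat.card_Ico,
      nsmul_eq_mul]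
  have haF : ∑ i ∈ range n, a i * F i = A := by
    rw [hFdef, sum_range_poolTail (by omega) (fun i v => a i * v), ← sum_mul, hsum, hA]
    simp only [sq]
    ring
  have hF : AntitoneOn (fun i => F i / √A) (Set.Iio n) := fun i hi j hj hij =>
    div_le_div_of_nonneg_right (antitoneOn_poolTail ha hca hi hj hij) (Real.sqrt_nonneg A)
  have hF0 : ∀ i < n, 0 ≤ F i / √A := fun i hi =>
    div_nonneg (poolTail_nonneg ha0 ((ha0 m (by omega)).trans hac) i hi) (Real.sqrt_nonneg A)
  rw [← hA]
  refine IsGreatest.csSup_eq ⟨⟨fun i => F i / √A, ?_, ?_⟩, ?_⟩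
  · rw [topEll2_of_antitoneOn hrn hF hF0, Real.sqrt_le_one]
    simp_rw [div_pow, Real.sq_sqrt (show 0 ≤ A from sum_nonneg fun i _ => sq_nonneg (F i))]
    rw [← sum_div]
    exact div_self_le_one A
  · rw [Fin.sum_univ_eq_sum_range (fun i => a i * (F i / √A))]
    simp_rw [mul_div_assoc']
    rw [← sum_div, haF, Real.div_sqrt]
  · rintro _ ⟨y, hy, rfl⟩
    calc ∑ i : Fin n, a i * y i ≤ √A * topEll2 r y :=
          sum_mul_le_sqrt_mul_topEll2 hmr.le hrn ha ha0 hsum hac y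
      _ ≤ √A := mul_le_of_le_one_right (Real.sqrt_nonneg A) hy

theorem dual_topEll2_closed_form_general {n r : ℕ} (hr2 : r ≤ n)
    (x : ℕ → ℝ)
    (hmono : ∀ i j, 1 ≤ i → i ≤ j → j ≤ n → x j ≤ x i)
    (hnonneg : ∀ i, 1 ≤ i → i ≤ n → 0 ≤ x i)
    (s : ℕ) (hs : s < r)
    (hcond : s = r - 1 ∨ (∑ i ∈ Finset.Icc (r - s) n, x i) / (s + 1) < x (r - s - 1))
    (hmin : ∀ t, t < s →
      ¬(t = r - 1 ∨ (∑ i ∈ Finset.Icc (r - t) n, x i) / (t + 1) < x (r - t - 1))) :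
    dualVec (topEll2 r) (fun i : Fin n => x ((i : ℕ) + 1)) =
      Real.sqrt ((∑ i ∈ Finset.Icc 1 (r - s - 1), x i ^ 2) +
        (∑ i ∈ Finset.Icc (r - s) n, x i) ^ 2 / (s + 1)) := by
  set m := r - s - 1
  set T := ∑ i ∈ Icc (r - s) n, x i with hTdef
  have hrs : r - s = m + 1 := by omega
  have hrm : r - m = s + 1 := by omega
  have hT : T = ∑ i ∈ Ico m n, x (i + 1) := by rw [hTdef, hrs, sum_Icc_add_one]
  have hsq : ∑ i ∈ Icc 1 m, x i ^ 2 = ∑ i ∈ range m, x (i + 1) ^ 2 := by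
    rw [range_eq_Ico]
    exact sum_Icc_add_one (fun i => x i ^ 2) 0 m
  have hsum : ∑ i ∈ Ico m n, x (i + 1) = (r - m : ℕ) * (T / (s + 1)) := by
    rw [hrm, ← hT]
    push_cast
    field_simp
  have hac : x (m + 1) ≤ T / (s + 1) := by
    rw [le_div_iff₀' (by positivity), ← hrs]
    refine succ_mul_le_sum_Icc (by omega)
      (fun i hi => hnonneg i (by rw [mem_Icc] at hi; omega) (mem_Icc.1 hi).2) fun hs0 => ?_
    obtain ⟨-, h⟩ := not_or.1 (hmin (s - 1) (by omega))
    rw [not_lt, show r - (s - 1) - 1 = r - s by omega, show r - (s - 1) = r - s + 1 by omega,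
      Nat.cast_pred hs0, sub_add_cancel] at h
    exact h
  have hca : ∀ i < m, T / (s + 1) ≤ x (i + 1) := fun i hi =>
    (hcond.resolve_left (by omega)).le.trans (hmono _ _ (by omega) (by omega) (by omega))
  rw [dualVec_topEll2_eq_sqrt (by omega) hr2
    (fun i hi j hj hij => hmono _ _ (by omega) (by omega) (Set.mem_Iio.1 hj))
    (fun i hi => hnonneg _ (by omega) hi) hsum hac hca, hsq, hrm]
  push_cast
  field_simp

/-- closed form for the dual of the `top-r ℓ²` norm at a vector with
nonincreasing nonnegative entries `x₁ ≥ … ≥ xₙ ≥ 0` (1-indexed):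
`(‖x‖_{ℓ²,r})^D = sqrt (Σ_{i=1}^{r−s−1} xᵢ² + (Σ_{i=r−s}^n xᵢ)²/(s+1))`,
where `s` is the smallest integer in `{0,…,r−1}` with
`x_{r−s−1} > (Σ_{i=r−s}^n xᵢ)/(s+1)` (convention `x₀ = +∞`, encoded by the
disjunct `s = r − 1`). -/
theorem dual_topEll2_closed_form {n r : ℕ} (hr1 : 1 ≤ r) (hr2 : r ≤ n)
    (x : ℕ → ℝ)
    (hmono : ∀ i j, 1 ≤ i → i ≤ j → j ≤ n → x j ≤ x i)
    (hnonneg : ∀ i, 1 ≤ i → i ≤ n → 0 ≤ x i)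
    (s : ℕ) (hs : s < r)
    (hcond : s = r - 1 ∨ (∑ i ∈ Finset.Icc (r - s) n, x i) / (s + 1) < x (r - s - 1))
    (hmin : ∀ t, t < s →
      ¬(t = r - 1 ∨ (∑ i ∈ Finset.Icc (r - t) n, x i) / (t + 1) < x (r - t - 1))) :
    dualVec (topEll2 r) (fun i : Fin n => x ((i : ℕ) + 1)) =
      Real.sqrt ((∑ i ∈ Finset.Icc 1 (r - s - 1), x i ^ 2) +
        (∑ i ∈ Finset.Icc (r - s) n, x i) ^ 2 / (s + 1)) :=
  dual_topEll2_closed_form_general hr2 x hmono hnonneg s hs hcond hmin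
end

section
/- For x ∈ ℝⁿ and every 1 ≤ k ≤ n, the k-support norm satisfies ‖x‖₂ ≤ ‖x‖ₖ^{sp} ≤ ‖x‖₁, with ‖x‖ₖ^{sp} = ‖x‖₂ if and only if x has at most k nonzero entries. -/
open BigOperators Finset

/-- the sorted list -/
noncomputable def svl {n : ℕ} (x : Fin n → ℝ) : List ℝ :=
  (List.ofFn fun j : Fin n => |x j|).mergeSort (fun a b => decide (a ≥ b))

lemma svl_perm {n : ℕ} (x : Fin n → ℝ) : (svl x).Perm (List.ofFn fun j : Fin n => |x j|) :=
  List.mergeSort_perm _ _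

lemma svl_sorted {n : ℕ} (x : Fin n → ℝ) : (svl x).Pairwise (· ≥ ·) := by
  have h := List.pairwise_mergeSort (le := fun a b : ℝ => decide (a ≥ b))
    (fun a b c hab hbc => by simp_all; linarith)
    (fun a b => by simp [ge_iff_le]; exact le_total b a)
    (List.ofFn fun j : Fin n => |x j|)
  simpa [svl] using h

lemma svl_nonneg {n : ℕ} (x : Fin n → ℝ) : ∀ a ∈ svl x, 0 ≤ a := by
  intro a ha
  have := (svl_perm x).mem_iff.mp ha
  simp only [List.mem_ofFn] at this
  obtain ⟨j, rfl⟩ := this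
  exact abs_nonneg _

lemma svl_length {n : ℕ} (x : Fin n → ℝ) : (svl x).length = n := by
  simp [svl]

lemma svl_coe {n : ℕ} (x : Fin n → ℝ) :
    (svl x : Multiset ℝ) = Multiset.map (fun j => |x j|) (Finset.univ : Finset (Fin n)).val := by
  rw [Fin.univ_def]
  simp only [Multiset.map_coe]
  exact Quot.sound ((svl_perm x).trans (by rw [List.ofFn_eq_map]))

lemma svVec_eq {n : ℕ} (x : Fin n → ℝ) (i : ℕ) : svVec x i = (svl x).getD i 0 := rfl


lemma take_sum_nonneg (l : List ℝ) (h0 : ∀ a ∈ l, 0 ≤ a) (k : ℕ) : 0 ≤ (l.take k).sum :=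
  List.sum_nonneg (fun a ha => h0 a (List.mem_of_mem_take ha))

lemma take_sum_mono (l : List ℝ) (h0 : ∀ a ∈ l, 0 ≤ a) {c k : ℕ} (hck : c ≤ k) :
    (l.take c).sum ≤ (l.take k).sum := by
  induction l generalizing c k with
  | nil => simp
  | cons a l ih =>
    cases c with
    | zero => exact take_sum_nonneg _ h0 _
    | succ c =>
      obtain ⟨k, rfl⟩ := Nat.exists_eq_add_of_le hck
      simp only [List.take_succ_cons, List.sum_cons, Nat.succ_add]
      exact add_le_add_right (ih (fun a ha => h0 a (List.mem_cons_of_mem _ ha)) (Nat.le_add_right _ _)) _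

lemma sub_multiset_sum_le (l : List ℝ) (hs : l.Pairwise (· ≥ ·)) (h0 : ∀ a ∈ l, 0 ≤ a)
    (m : Multiset ℝ) (hm : m ≤ ↑l) : m.sum ≤ (l.take (Multiset.card m)).sum := by
  induction l generalizing m with
  | nil =>
    have : m = 0 := Multiset.le_zero.mp (by simpa using hm)
    simp [this]
  | cons a l ih =>
    have hs' : l.Pairwise (· ≥ ·) := hs.of_cons
    have h0' : ∀ b ∈ l, 0 ≤ b := fun b hb => h0 b (List.mem_cons_of_mem _ hb)
    have hal : ∀ b ∈ l, b ≤ a := fun b hb => List.rel_of_pairwise_cons hs hb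
    by_cases ham : a ∈ m
    · obtain ⟨m', rfl⟩ := Multiset.exists_cons_of_mem ham
      have hm' : m' ≤ ↑l := by
        have : (a ::ₘ m') ≤ a ::ₘ (↑l : Multiset ℝ) := by simpa using hm
        exact (Multiset.cons_le_cons_iff a).mp this
      simp only [Multiset.sum_cons, Multiset.card_cons, List.take_succ_cons, List.sum_cons]
      exact add_le_add_right (ih hs' h0' m' hm') a
    · have hm' : m ≤ ↑l := by
        rw [Multiset.le_iff_count] at hm ⊢
        intro b
        rcases eq_or_ne b a with rfl | hba
        · simp [Multiset.count_eq_zero_of_notMem ham]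
        · have := hm b
          rwa [show ((a :: l : List ℝ) : Multiset ℝ) = a ::ₘ (↑l) from rfl,
            Multiset.count_cons_of_ne hba] at this
      refine (ih hs' h0' m hm').trans ?_
      cases hc : Multiset.card m with
      | zero => simp
      | succ c =>
        simp only [List.take_succ_cons, List.sum_cons]
        by_cases hcl : c < l.length
        · rw [List.sum_take_succ _ _ hcl]
          have : l[c] ≤ a := hal _ (List.getElem_mem hcl)
          linarith [take_sum_nonneg l h0' c]
        · rw [List.take_of_length_le (by omega), List.take_of_length_le (by omega)]
          linarith [h0 a List.mem_cons_self]

lemma take_sum_eq_range (L : List ℝ) (k : ℕ) :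
    (L.take k).sum = ∑ i ∈ Finset.range k, L.getD i 0 := by
  induction k with
  | zero => simp
  | succ k ih =>
    rw [Finset.sum_range_succ, ← ih]
    by_cases hk : k < L.length
    · rw [List.sum_take_succ _ _ hk, List.getD_eq_getElem _ _ hk]
    · rw [List.take_of_length_le (by omega), List.take_of_length_le (by omega),
        List.getD_eq_default _ _ (by omega), add_zero]
-- squared sorted list
noncomputable def svl2 {n : ℕ} (x : Fin n → ℝ) : List ℝ := (svl x).map (fun a => a ^ 2)

lemma svl2_sorted {n : ℕ} (x : Fin n → ℝ) : (svl2 x).Pairwise (· ≥ ·) := by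
  rw [svl2, List.pairwise_map]
  refine ((svl_sorted x).imp_of_mem ?_)
  intro a b ha hb hab
  exact pow_le_pow_left₀ (svl_nonneg x b hb) hab 2

lemma svl2_nonneg {n : ℕ} (x : Fin n → ℝ) : ∀ a ∈ svl2 x, 0 ≤ a := by
  intro a ha
  simp only [svl2, List.mem_map] at ha
  obtain ⟨b, _, rfl⟩ := ha
  positivity

lemma svl2_getD {n : ℕ} (x : Fin n → ℝ) (i : ℕ) : (svl2 x).getD i 0 = svVec x i ^ 2 := by
  rw [svVec_eq]
  by_cases hi : i < (svl x).length
  · rw [List.getD_eq_getElem _ _ hi, List.getD_eq_getElem _ _ (by simpa [svl2] using hi)]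
    simp [svl2]
  · rw [List.getD_eq_default _ _ (by simp only [svl2, List.length_map]; omega), List.getD_eq_default _ _ (by omega)]
    norm_num

lemma svl2_take_sum {n : ℕ} (x : Fin n → ℝ) (k : ℕ) :
    ((svl2 x).take k).sum = ∑ i ∈ Finset.range k, svVec x i ^ 2 := by
  rw [take_sum_eq_range]
  exact Finset.sum_congr rfl fun i _ => svl2_getD x i

lemma svl2_coe {n : ℕ} (x : Fin n → ℝ) :
    (svl2 x : Multiset ℝ) = Multiset.map (fun j => x j ^ 2) (Finset.univ : Finset (Fin n)).val := by
  rw [svl2, ← Multiset.map_coe, svl_coe, Multiset.map_map]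
  exact Multiset.map_congr rfl (fun j _ => by simp [sq_abs])

/-- key subset lemma -/
lemma subset_sum_sq_le {n : ℕ} (x : Fin n → ℝ) (S : Finset (Fin n)) {k : ℕ} (hS : S.card ≤ k) :
    ∑ i ∈ S, x i ^ 2 ≤ ∑ i ∈ Finset.range k, svVec x i ^ 2 := by
  have hm : (Multiset.map (fun i => x i ^ 2) S.val) ≤ (svl2 x : Multiset ℝ) := by
    rw [svl2_coe]
    exact Multiset.map_le_map (Finset.val_le_iff.mpr (Finset.subset_univ S))
  have h1 := sub_multiset_sum_le (svl2 x) (svl2_sorted x) (svl2_nonneg x) _ hm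
  have hcard : Multiset.card (Multiset.map (fun i => x i ^ 2) S.val) = S.card := by simp
  calc ∑ i ∈ S, x i ^ 2 = (Multiset.map (fun i => x i ^ 2) S.val).sum := rfl
    _ ≤ ((svl2 x).take S.card).sum := by rwa [hcard] at h1
    _ ≤ ((svl2 x).take k).sum := take_sum_mono _ (svl2_nonneg x) hS
    _ = _ := svl2_take_sum x k

lemma total_sum_sq {n : ℕ} (x : Fin n → ℝ) :
    ∑ i, x i ^ 2 = ∑ i ∈ Finset.range n, svVec x i ^ 2 := by
  rw [← svl2_take_sum, List.take_of_length_le (by simp [svl2, svl_length])]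
  calc ∑ i, x i ^ 2 = (Multiset.map (fun i => x i ^ 2) Finset.univ.val).sum := rfl
    _ = ((svl2 x : Multiset ℝ)).sum := by rw [svl2_coe]
    _ = (svl2 x).sum := by simp

/-- if more than k nonzero entries then svVec x k > 0 (k < n required implicitly) -/
lemma svVec_pos {n k : ℕ} (x : Fin n → ℝ)
    (h : k < (Finset.univ.filter fun i => x i ≠ 0).card) : 0 < svVec x k := by
  have hkn : k < n := lt_of_lt_of_le h (le_trans (Finset.card_filter_le _ _) (by simp))
  have hkl : k < (svl x).length := by rwa [svl_length]
  rw [svVec_eq, List.getD_eq_getElem _ _ hkl]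
  rcases lt_or_ge 0 ((svl x)[k]) with hp | hp
  · exact hp
  exfalso
  have hz : (svl x)[k] = 0 := le_antisymm hp (svl_nonneg x _ (List.getElem_mem hkl))
  -- count of nonzero entries
  have hcount : Multiset.countP (fun a => a ≠ 0) (svl x : Multiset ℝ)
      = (Finset.univ.filter fun i => x i ≠ 0).card := by
    rw [svl_coe, Multiset.countP_map]
    rw [Finset.card_def, Finset.filter_val]
    congr 1
    exact Multiset.filter_congr (fun i _ => by simp [abs_ne_zero])
  -- but all entries from index k on are zero
  have hdrop : ∀ b ∈ (svl x).drop k, b = 0 := by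
    intro b hb
    obtain ⟨j, hj, rfl⟩ := List.getElem_of_mem hb
    rw [List.getElem_drop]
    have hkj : k + j < (svl x).length := by
      rw [List.length_drop] at hj; omega
    have hle : (svl x)[k + j] ≤ (svl x)[k] := by
      rcases Nat.eq_or_lt_of_le (Nat.le_add_right k j) with heq | hlt
      · simp [← heq]
      · have := List.pairwise_iff_get.mp (svl_sorted x) ⟨k, hkl⟩ ⟨k + j, hkj⟩ hlt
        exact this
    have hge : 0 ≤ (svl x)[k + j] := svl_nonneg x _ (List.getElem_mem hkj)
    linarith [hz ▸ hle]
  have hsplit : Multiset.countP (fun a => a ≠ 0) (svl x : Multiset ℝ) ≤ k := by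
    rw [Multiset.coe_countP]
    conv_lhs => rw [← List.take_append_drop k (svl x)]
    rw [List.countP_append]
    have h1 : ((svl x).take k).countP (fun b => decide (b ≠ 0)) ≤ k := by
      calc _ ≤ ((svl x).take k).length := List.countP_le_length
        _ ≤ k := by simp
    have h2 : ((svl x).drop k).countP (fun b => decide (b ≠ 0)) = 0 := by
      rw [List.countP_eq_zero]
      intro b hb
      simp [hdrop b hb]
    omega
  omega
lemma euclN_nonneg {n : ℕ} (x : Fin n → ℝ) : 0 ≤ euclN x := Real.sqrt_nonneg _

lemma euclN_sq {n : ℕ} (x : Fin n → ℝ) : euclN x ^ 2 = ∑ i, x i ^ 2 :=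
  Real.sq_sqrt (Finset.sum_nonneg fun i _ => by positivity)

lemma topEll2_sq {n : ℕ} (r : ℕ) (x : Fin n → ℝ) :
    topEll2 r x ^ 2 = ∑ i ∈ Finset.range r, svVec x i ^ 2 :=
  Real.sq_sqrt (Finset.sum_nonneg fun i _ => by positivity)

section main
variable {n k : ℕ} (x : Fin n → ℝ)

/-- the defining set -/
def kset (k : ℕ) (x : Fin n → ℝ) : Set ℝ :=
  {c : ℝ | ∃ (N : ℕ) (v : Fin N → (Fin n → ℝ)),
    (∀ g, suppCard (v g) ≤ k) ∧ (∑ g, v g) = x ∧ c = ∑ g, euclN (v g)}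

lemma ksup_eq : ksup k x = sInf (kset k x) := rfl

lemma kset_nonneg : ∀ c ∈ kset k x, 0 ≤ c := by
  rintro c ⟨N, v, -, -, rfl⟩
  exact Finset.sum_nonneg fun g _ => euclN_nonneg _

lemma kset_bdd : BddBelow (kset k x) := ⟨0, fun c hc => kset_nonneg x c hc⟩

lemma l1_mem (hk1 : 1 ≤ k) : l1N x ∈ kset k x := by
  refine ⟨n, fun g i => if i = g then x g else 0, ?_, ?_, ?_⟩
  · intro g
    refine le_trans (le_trans (Finset.card_le_card ?_) (Finset.card_singleton g).le) hk1
    intro i hi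
    simp only [Finset.mem_filter, Finset.mem_univ, true_and, ne_eq, ite_eq_right_iff,
      not_forall] at hi
    simp [hi.1]
  · funext i
    simp [Finset.sum_apply, Finset.sum_ite_eq]
  · unfold l1N euclN
    refine Finset.sum_congr rfl fun g _ => ?_
    rw [show ∑ i, (if i = g then x g else 0) ^ 2 = x g ^ 2 by
      simp [apply_ite (fun t : ℝ => t ^ 2)]]
    exact (Real.sqrt_sq_eq_abs _).symm

lemma pairing : ∀ c ∈ kset k x, (∑ i, x i ^ 2) ≤ c * topEll2 k x := by
  rintro c ⟨N, v, hsupp, hsum, rfl⟩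
  have hT : 0 ≤ topEll2 k x := Real.sqrt_nonneg _
  have key : ∀ g, (∑ i, v g i * x i) ≤ euclN (v g) * topEll2 k x := by
    intro g
    set S := Finset.univ.filter (fun i => v g i ≠ 0) with hS
    have h1 : (∑ i, v g i * x i) = ∑ i ∈ S, v g i * x i :=
      (Finset.sum_filter_of_ne (fun i _ h => by
        intro hv; exact h (by rw [hv, zero_mul]))).symm
    have hcs := Finset.sum_mul_sq_le_sq_mul_sq S (fun i => v g i) (fun i => x i)
    have h2 : (∑ i ∈ S, v g i * x i) ≤
        Real.sqrt (∑ i ∈ S, v g i ^ 2) * Real.sqrt (∑ i ∈ S, x i ^ 2) := by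
      rw [← Real.sqrt_mul (Finset.sum_nonneg fun i _ => by positivity)]
      refine le_trans (le_abs_self _) ?_
      rw [← Real.sqrt_sq_eq_abs]
      exact Real.sqrt_le_sqrt hcs
    have h3 : Real.sqrt (∑ i ∈ S, v g i ^ 2) ≤ euclN (v g) := by
      apply Real.sqrt_le_sqrt
      exact Finset.sum_le_sum_of_subset_of_nonneg (Finset.subset_univ S)
        (fun i _ _ => by positivity)
    have h4 : Real.sqrt (∑ i ∈ S, x i ^ 2) ≤ topEll2 k x := by
      apply Real.sqrt_le_sqrt
      exact subset_sum_sq_le x S (hsupp g)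
    calc (∑ i, v g i * x i) = ∑ i ∈ S, v g i * x i := h1
      _ ≤ _ := h2
      _ ≤ euclN (v g) * topEll2 k x :=
        mul_le_mul h3 h4 (Real.sqrt_nonneg _) (euclN_nonneg _)
  calc (∑ i, x i ^ 2) = ∑ i, (∑ g, v g i) * x i := by
        refine Finset.sum_congr rfl fun i _ => ?_
        rw [show (∑ g, v g i) = x i by rw [← Finset.sum_apply i Finset.univ v, hsum], sq]
    _ = ∑ g, ∑ i, v g i * x i := by
        rw [Finset.sum_comm]
        exact Finset.sum_congr rfl fun i _ => by rw [Finset.sum_mul]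
    _ ≤ ∑ g, euclN (v g) * topEll2 k x := Finset.sum_le_sum fun g _ => key g
    _ = (∑ g, euclN (v g)) * topEll2 k x := by rw [Finset.sum_mul]

lemma topEll2_le_euclN (hk2 : k ≤ n) : topEll2 k x ≤ euclN x := by
  apply Real.sqrt_le_sqrt
  rw [total_sum_sq]
  exact Finset.sum_le_sum_of_subset_of_nonneg
    (Finset.range_subset_range.mpr hk2) (fun i _ _ => by positivity)

lemma euclN_le_mem (hk2 : k ≤ n) : ∀ c ∈ kset k x, euclN x ≤ c := by
  intro c hc
  have h1 := pairing x c hc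
  have h2 := topEll2_le_euclN x hk2
  have hc0 := kset_nonneg x c hc
  rcases eq_or_lt_of_le (euclN_nonneg x) with hE | hE
  · linarith
  have : euclN x ^ 2 ≤ c * euclN x := by
    rw [euclN_sq]
    exact h1.trans (mul_le_mul_of_nonneg_left h2 hc0)
  nlinarith

lemma kset_nonempty (hk1 : 1 ≤ k) : (kset k x).Nonempty := ⟨l1N x, l1_mem x hk1⟩

lemma self_mem (hsupp : suppCard x ≤ k) : euclN x ∈ kset k x := by
  exact ⟨1, fun _ => x, fun g => hsupp, by simp, by simp⟩

end main


/-- `‖x‖₂ ≤ ‖x‖ₖ^{sp} ≤ ‖x‖₁`, with `‖x‖ₖ^{sp} = ‖x‖₂` iff `x` has at most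
`k` nonzero entries. -/
theorem ksup_between_l2_l1 {n k : ℕ} (hk1 : 1 ≤ k) (hk2 : k ≤ n) (x : Fin n → ℝ) :
    euclN x ≤ ksup k x ∧ ksup k x ≤ l1N x ∧ (ksup k x = euclN x ↔ suppCard x ≤ k) := by
  rw [ksup_eq]
  have hne := kset_nonempty x hk1
  have hbdd := kset_bdd (k := k) x
  have hlow : euclN x ≤ sInf (kset k x) := le_csInf hne (euclN_le_mem x hk2)
  refine ⟨hlow, csInf_le hbdd (l1_mem x hk1), ?_, fun hs => le_antisymm (csInf_le hbdd (self_mem x hs)) hlow⟩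
  intro heq
  by_contra hsk
  push_neg at hsk
  -- strictness
  have hkn : k < n := lt_of_lt_of_le hsk (le_trans (Finset.card_filter_le _ _) (by simp))
  have hsvk : 0 < svVec x k := svVec_pos x hsk
  have hsv0 : 0 < svVec x 0 := svVec_pos x (lt_of_lt_of_le (by omega) hsk.le)
  have hTsq : topEll2 k x ^ 2 = ∑ i ∈ Finset.range k, svVec x i ^ 2 := topEll2_sq k x
  have hEsq : euclN x ^ 2 = ∑ i ∈ Finset.range n, svVec x i ^ 2 := by
    rw [euclN_sq, total_sum_sq]
  have hTnn : 0 ≤ topEll2 k x := Real.sqrt_nonneg _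
  have hT0 : 0 < topEll2 k x := by
    have : svVec x 0 ^ 2 ≤ topEll2 k x ^ 2 := by
      rw [hTsq]
      exact Finset.single_le_sum (f := fun i => svVec x i ^ 2)
        (fun i _ => by positivity) (Finset.mem_range.mpr (by omega))
    nlinarith [Real.sqrt_nonneg (∑ i ∈ Finset.range k, svVec x i ^ 2), hTnn]
  have hTE : topEll2 k x < euclN x := by
    have hlt : topEll2 k x ^ 2 < euclN x ^ 2 := by
      rw [hTsq, hEsq]
      have := Finset.sum_le_sum_of_subset_of_nonneg
        (Finset.range_subset_range.mpr (show k + 1 ≤ n by omega))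
        (fun i (_ : i ∈ Finset.range n) _ => (by positivity : (0:ℝ) ≤ svVec x i ^ 2))
      rw [Finset.sum_range_succ] at this
      nlinarith
    nlinarith [euclN_nonneg x, hTnn]
  have hE0 : 0 < euclN x := lt_of_le_of_lt hT0.le hTE
  -- every element c satisfies E^2 ≤ c * T, hence c ≥ E^2/T > E
  have hgt : euclN x ^ 2 / topEll2 k x ≤ sInf (kset k x) := by
    apply le_csInf hne
    intro c hc
    have := pairing x c hc
    rw [div_le_iff₀ hT0]
    rw [euclN_sq]
    exact this
  have : euclN x < euclN x ^ 2 / topEll2 k x := by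
    rw [lt_div_iff₀ hT0]
    nlinarith
  rw [heq] at *
  linarith
end
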